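/- arXiv:2011.04078 — 2 statements merged into one kernel-verified Lean document; each statement's English description precedes it below -/
import Mathlib

section
/- Let H be a compact group with irreducible unitary representations π_k : H → SU(d_k) for k = 1,…,N. If a unit vector Ψ ∈ ℂ^{d₁} ⊗ ⋯ ⊗ ℂ^{d_N} satisfies (π₁(h) ⊗ ⋯ ⊗ π_N(h)) Ψ = Ψ for all h ∈ H, then every single-site reduced density matrix ρ_k of Ψ equals (1/d_k)·Id; i.e. Ψ is locally maximally entangled. -/
/-! Reshape `Ψ` at site `k` into a `d k × (rest)` matrix `Φ`. Then `ρ_k = Φ Φᴴ`, and the product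
action `⊗ⱼ gⱼ` becomes `Φ ↦ g_k Φ Uᵀ`, where `U` is the Kronecker product of the other local
unitaries; as `Uᵀ` is unitary, `ρ_k ↦ g_k ρ_k g_kᴴ`. Invariance of `Ψ` therefore makes `ρ_k`
commute with the irreducible representation `π_k`, so `ρ_k` is scalar by Schur's lemma, and
`tr ρ_k = ‖Ψ‖² = 1` fixes the scalar to `1 / d k`. -/

open Matrix

/-- The action of a tuple of local matrices `g k` on the tensor product
`ℂ^{d 0} ⊗ ⋯ ⊗ ℂ^{d (N-1)}`, realised as the function space `(∀ k, Fin (d k)) → ℂ`. -/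
noncomputable def hAct {N : ℕ} {d : Fin N → ℕ}
    (g : ∀ k, Matrix (Fin (d k)) (Fin (d k)) ℂ) (Ψ : (∀ k, Fin (d k)) → ℂ) :
    (∀ k, Fin (d k)) → ℂ :=
  fun x => ∑ y : ∀ k, Fin (d k), (∏ k, g k (x k) (y k)) * Ψ y

/-- The `k`-th single-site reduced density matrix of a state `Ψ` in the tensor product,
obtained by tracing out all other sites. -/
noncomputable def rho {N : ℕ} {d : Fin N → ℕ} (Ψ : (∀ k, Fin (d k)) → ℂ) (k : Fin N) :
    Matrix (Fin (d k)) (Fin (d k)) ℂ :=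
  fun a b => ∑ x : ∀ j, Fin (d j),
    if x k = a then Ψ x * (starRingEnd ℂ) (Ψ (Function.update x k b)) else 0

theorem Equiv.update_piSplitAt_symm {ι : Type*} [DecidableEq ι] {κ : ι → Type*} (k : ι)
    (a b : κ k) (t : ∀ j : {j // j ≠ k}, κ j) :
    Function.update ((Equiv.piSplitAt k κ).symm (a, t)) k b = (Equiv.piSplitAt k κ).symm (b, t) := by
  ext j
  by_cases hj : j = k
  · subst hj; simp
  · simp [hj]

theorem Unitary.commute_of_eq_mul_mul_star {R : Type*} [Monoid R] [StarMul R] {U M : R}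
    (hU : U ∈ unitary R) (h : M = U * M * star U) : Commute U M :=
  calc U * M = U * M * star U * U := by rw [mul_assoc (U * M), star_mul_self_of_mem hU, mul_one]
    _ = M * U := by rw [← h]

namespace Matrix

theorem exists_eq_smul_one_of_forall_commute {ι K n : Type*} [Field K] [IsAlgClosed K]
    [Fintype n] [DecidableEq n] [Nonempty n] (ρ : ι → Matrix n n K)
    (hirr : ∀ W : Submodule K (n → K), (∀ i, ∀ v ∈ W, ρ i *ᵥ v ∈ W) → W = ⊥ ∨ W = ⊤)
    {M : Matrix n n K} (hM : ∀ i, Commute (ρ i) M) : ∃ c : K, M = c • 1 := by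
  obtain ⟨μ, hμ⟩ := Module.End.exists_eigenvalue (mulVecLin M)
  set W := Module.End.eigenspace (mulVecLin M) μ
  have hinv : ∀ i, ∀ v ∈ W, ρ i *ᵥ v ∈ W := by
    intro i v hv
    rw [Module.End.mem_eigenspace_iff, mulVecLin_apply] at hv ⊢
    rw [mulVec_mulVec, ← (hM i).eq, ← mulVec_mulVec, hv, mulVec_smul]
  refine ⟨μ, ext_iff_mulVec.mpr fun v => ?_⟩
  have hv : v ∈ W := by
    rw [(hirr _ hinv).resolve_left hμ]; exact Submodule.mem_top
  rw [Module.End.mem_eigenspace_iff, mulVecLin_apply] at hv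
  rw [hv, smul_mulVec, one_mulVec]

section piKron

variable {ι : Type*} [Fintype ι] {m n : ι → Type*} {R : Type*}

def piKron [CommMonoid R] (g : ∀ i, Matrix (m i) (n i) R) : Matrix (∀ i, m i) (∀ i, n i) R :=
  of fun x y => ∏ i, g i (x i) (y i)

theorem piKron_apply [CommMonoid R] (g : ∀ i, Matrix (m i) (n i) R) (x : ∀ i, m i) (y : ∀ i, n i) :
    piKron g x y = ∏ i, g i (x i) (y i) := rfl

theorem piKron_mul_piKron [DecidableEq ι] {l : ι → Type*} [∀ i, Fintype (m i)] [CommSemiring R]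
    (g : ∀ i, Matrix (l i) (m i) R) (h : ∀ i, Matrix (m i) (n i) R) :
    piKron g * piKron h = piKron fun i => g i * h i := by
  ext x z
  simp only [mul_apply, piKron_apply, ← Finset.prod_mul_distrib, Finset.prod_univ_sum]
  rfl

theorem piKron_one [∀ i, DecidableEq (m i)] [CommSemiring R] :
    piKron (fun i => (1 : Matrix (m i) (m i) R)) = 1 := by
  ext x y
  rw [piKron_apply, one_apply]
  split_ifs with hxy
  · exact hxy ▸ Finset.prod_eq_one fun i _ => one_apply_eq (x i)
  · obtain ⟨i, hi⟩ := Function.ne_iff.mp hxy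
    exact Finset.prod_eq_zero (Finset.mem_univ i) (one_apply_ne hi)

theorem conjTranspose_piKron [CommSemiring R] [StarRing R] (g : ∀ i, Matrix (m i) (n i) R) :
    (piKron g)ᴴ = piKron fun i => (g i)ᴴ := by
  ext x y
  simp [piKron_apply, conjTranspose_apply, star_prod]

theorem piKron_mem_unitaryGroup [DecidableEq ι] [∀ i, Fintype (m i)] [∀ i, DecidableEq (m i)]
    [CommRing R] [StarRing R] {g : ∀ i, Matrix (m i) (m i) R}
    (hg : ∀ i, g i ∈ unitaryGroup (m i) R) : piKron g ∈ unitaryGroup (∀ i, m i) R := by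
  rw [mem_unitaryGroup_iff', star_eq_conjTranspose, conjTranspose_piKron, piKron_mul_piKron]
  simp_rw [← star_eq_conjTranspose, fun i => mem_unitaryGroup_iff'.mp (hg i), piKron_one]

end piKron

section matricize

variable {ι : Type*} [DecidableEq ι] {R : Type*}

def matricize {κ : ι → Type*} (k : ι) (Ψ : (∀ i, κ i) → R) :
    Matrix (κ k) (∀ j : {j // j ≠ k}, κ j) R :=
  of fun a t => Ψ ((Equiv.piSplitAt k κ).symm (a, t))

-- `vec` stacks the columns, so its index lists the column before the row.
theorem vec_matricize {κ : ι → Type*} (k : ι) (Ψ : (∀ i, κ i) → R) :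
    vec (matricize k Ψ) = Ψ ∘ ((Equiv.piSplitAt k κ).trans (Equiv.prodComm _ _)).symm := rfl

open scoped Kronecker in
theorem piKron_eq_submatrix_kronecker [Fintype ι] [CommMonoid R] {m n : ι → Type*}
    (g : ∀ i, Matrix (m i) (n i) R) (k : ι) :
    piKron g = (piKron (fun j : {j // j ≠ k} => g j) ⊗ₖ g k).submatrix
      ((Equiv.piSplitAt k m).trans (Equiv.prodComm _ _))
      ((Equiv.piSplitAt k n).trans (Equiv.prodComm _ _)) := by
  ext x y
  simp [piKron_apply, Fintype.prod_eq_mul_prod_subtype_ne _ k, mul_comm]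

theorem matricize_piKron_mulVec [Fintype ι] [CommSemiring R] {m n : ι → Type*} [∀ i, Fintype (n i)]
    (g : ∀ i, Matrix (m i) (n i) R) (Ψ : (∀ i, n i) → R) (k : ι) :
    matricize k (piKron g *ᵥ Ψ) =
      g k * matricize k Ψ * (piKron fun j : {j // j ≠ k} => g j)ᵀ := by
  rw [← vec_inj, ← kronecker_mulVec_vec, vec_matricize, vec_matricize,
    piKron_eq_submatrix_kronecker g k, submatrix_mulVec_equiv, Function.comp_assoc,
    Equiv.self_comp_symm, Function.comp_id]

end matricize

end Matrix

section ReducedDensityMatrix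

variable {N : ℕ} {d : Fin N → ℕ}

theorem rho_eq_matricize_mul_conjTranspose (Ψ : (∀ k, Fin (d k)) → ℂ) (k : Fin N) :
    rho Ψ k = matricize k Ψ * (matricize k Ψ)ᴴ := by
  ext a b
  rw [rho, ← (Equiv.piSplitAt k _).symm.sum_comp, Fintype.sum_prod_type, mul_apply]
  simp [matricize, Equiv.update_piSplitAt_symm]

theorem hAct_eq_piKron_mulVec (g : ∀ k, Matrix (Fin (d k)) (Fin (d k)) ℂ)
    (Ψ : (∀ k, Fin (d k)) → ℂ) : hAct g Ψ = piKron g *ᵥ Ψ := rfl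

theorem rho_hAct {g : ∀ k, Matrix (Fin (d k)) (Fin (d k)) ℂ}
    (hg : ∀ k, g k ∈ unitaryGroup (Fin (d k)) ℂ) (Ψ : (∀ k, Fin (d k)) → ℂ) (k : Fin N) :
    rho (hAct g Ψ) k = g k * rho Ψ k * (g k)ᴴ := by
  set U := piKron fun j : {j // j ≠ k} => g j
  have hU : Uᵀ * Uᵀᴴ = 1 := by
    rw [conjTranspose_transpose_eq_transpose_conjTranspose, ← transpose_mul, ← star_eq_conjTranspose,
      mem_unitaryGroup_iff'.mp (piKron_mem_unitaryGroup fun j => hg j : U ∈ unitaryGroup _ ℂ),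
      transpose_one]
  rw [rho_eq_matricize_mul_conjTranspose, rho_eq_matricize_mul_conjTranspose,
    hAct_eq_piKron_mulVec, matricize_piKron_mulVec]
  simp only [conjTranspose_mul, Matrix.mul_assoc]
  rw [← Matrix.mul_assoc Uᵀ, hU, Matrix.one_mul]

theorem trace_rho (Ψ : (∀ k, Fin (d k)) → ℂ) (k : Fin N) : trace (rho Ψ k) = star Ψ ⬝ᵥ Ψ := by
  rw [rho_eq_matricize_mul_conjTranspose, trace_mul_comm, ← star_vec_dotProduct_vec, vec_matricize]
  exact comp_equiv_dotProduct_comp_equiv (star Ψ) Ψ _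

end ReducedDensityMatrix

theorem diagonal_symmetry_implies_LME_general {H : Type} [Group H] (N : ℕ) (d : Fin N → ℕ)
    (π : ∀ k, H →* Matrix.specialUnitaryGroup (Fin (d k)) ℂ)
    (hirr : ∀ k, ∀ W : Submodule ℂ (Fin (d k) → ℂ),
      (∀ h : H, ∀ v ∈ W, Matrix.mulVec (π k h : Matrix (Fin (d k)) (Fin (d k)) ℂ) v ∈ W) →
        W = ⊥ ∨ W = ⊤)
    (Ψ : (∀ k, Fin (d k)) → ℂ)
    (hunit : ∑ x : ∀ k, Fin (d k), Complex.normSq (Ψ x) = 1)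
    (hinv : ∀ h : H, hAct (fun k => (π k h : Matrix (Fin (d k)) (Fin (d k)) ℂ)) Ψ = Ψ) :
    ∀ k, rho Ψ k = ((d k : ℂ))⁻¹ • (1 : Matrix (Fin (d k)) (Fin (d k)) ℂ) := by
  intro k
  have hunitary : ∀ h j, (π j h : Matrix (Fin (d j)) (Fin (d j)) ℂ) ∈ unitaryGroup _ ℂ :=
    fun h j => (mem_specialUnitaryGroup_iff.mp (π j h).2).1
  have hcomm : ∀ h, Commute (π k h : Matrix (Fin (d k)) (Fin (d k)) ℂ) (rho Ψ k) := by
    intro h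
    have hconj := rho_hAct (hunitary h) Ψ k
    rw [hinv h] at hconj
    exact Unitary.commute_of_eq_mul_mul_star (hunitary h k) hconj
  have htrace : trace (rho Ψ k) = 1 := by
    rw [trace_rho, ← Complex.ofReal_one, ← hunit, Complex.ofReal_sum]
    simp [dotProduct, Complex.normSq_eq_conj_mul_self]
  have : Nonempty (Fin (d k)) := by
    by_contra hempty
    simp [trace, not_nonempty_iff.mp hempty] at htrace
  obtain ⟨c, hc⟩ := exists_eq_smul_one_of_forall_commute _ (hirr k) hcomm
  rw [hc, trace_smul, trace_one, Fintype.card_fin, smul_eq_mul] at htrace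
  rw [hc, eq_inv_of_mul_eq_one_left htrace]

/-- Let `H` be a compact group with irreducible unitary representations
`π k : H → SU(d k)`.  If a unit vector `Ψ ∈ ℂ^{d 0} ⊗ ⋯ ⊗ ℂ^{d (N-1)}` satisfies
`(π 0 h ⊗ ⋯ ⊗ π (N-1) h) Ψ = Ψ` for all `h ∈ H`, then every single-site reduced density
matrix of `Ψ` is maximally mixed, `ρ_k = (1 / d k) • 1`; i.e. `Ψ` is locally maximally
entangled. -/
theorem diagonal_symmetry_implies_LME {H : Type} [Group H] [TopologicalSpace H]
    [IsTopologicalGroup H] [CompactSpace H] (N : ℕ) (d : Fin N → ℕ)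
    (π : ∀ k, H →* Matrix.specialUnitaryGroup (Fin (d k)) ℂ)
    (hcont : ∀ k, Continuous fun h => ((π k h : Matrix (Fin (d k)) (Fin (d k)) ℂ)))
    (hirr : ∀ k, ∀ W : Submodule ℂ (Fin (d k) → ℂ),
      (∀ h : H, ∀ v ∈ W, Matrix.mulVec (π k h : Matrix (Fin (d k)) (Fin (d k)) ℂ) v ∈ W) →
        W = ⊥ ∨ W = ⊤)
    (Ψ : (∀ k, Fin (d k)) → ℂ)
    (hunit : ∑ x : ∀ k, Fin (d k), Complex.normSq (Ψ x) = 1)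
    (hinv : ∀ h : H, hAct (fun k => (π k h : Matrix (Fin (d k)) (Fin (d k)) ℂ)) Ψ = Ψ) :
    ∀ k, rho Ψ k = ((d k : ℂ))⁻¹ • (1 : Matrix (Fin (d k)) (Fin (d k)) ℂ) :=
  diagonal_symmetry_implies_LME_general N d π hirr Ψ hunit hinv
end

section
/- For the natural representation E = ℂ^d of SU(d), the tensor power E^{⊗N} contains a nonzero SU(d)-invariant vector if and only if N is an integer multiple of d. -/
open Matrix

/-- The diagonal action of a `d × d` matrix on the tensor power `(ℂ^d)^{⊗ι}`,
realised as the space of functions `(ι → Fin d) → ℂ`. -/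
noncomputable def tAct {ι : Type} [Fintype ι] [DecidableEq ι] {d : ℕ}
    (g : Matrix (Fin d) (Fin d) ℂ) (Ψ : (ι → Fin d) → ℂ) : (ι → Fin d) → ℂ :=
  fun x => ∑ y : ι → Fin d, (∏ i, g (x i) (y i)) * Ψ y

namespace InvAux

/-- The matrix whose `j`-th column is the basis vector `e_{v j}`. -/
noncomputable def Mv {d : ℕ} (v : Fin d → Fin d) : Matrix (Fin d) (Fin d) ℂ :=
  Matrix.of fun i j => if v j = i then 1 else 0

lemma det_Mv {d : ℕ} (v : Fin d → Fin d) :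
    (Mv v).det = ∑ σ : Equiv.Perm (Fin d),
      ((Equiv.Perm.sign σ : ℤ) : ℂ) * (if v = ⇑σ then 1 else 0) := by
  rw [Matrix.det_apply']
  refine Finset.sum_congr rfl fun σ _ => ?_
  congr 1
  simp only [Mv, Matrix.of_apply]
  rw [Fintype.prod_boole]
  congr 1
  simp [funext_iff]

lemma det_Mv_id {d : ℕ} : (Mv (fun i : Fin d => i)).det = 1 := by
  have : Mv (fun i : Fin d => i) = 1 := by
    ext i j
    simp [Mv, Matrix.one_apply, eq_comm]
  rw [this, Matrix.det_one]

lemma key {d : ℕ} (g : Matrix (Fin d) (Fin d) ℂ) (x : Fin d → Fin d) :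
    ∑ y : Fin d → Fin d, (∏ i, g (x i) (y i)) * (Mv y).det = g.det * (Mv x).det := by
  have hrhs : g.det * (Mv x).det = (gᵀ * Mv x).det := by
    rw [Matrix.det_mul, Matrix.det_transpose]
  have hentry : gᵀ * Mv x = Matrix.of fun i j => g (x j) i := by
    ext i j
    simp [Matrix.mul_apply, Mv, Matrix.transpose_apply, mul_ite]
  rw [hrhs, hentry, Matrix.det_apply']
  have hlhs : ∀ y : Fin d → Fin d, (∏ i, g (x i) (y i)) * (Mv y).det
      = ∑ σ : Equiv.Perm (Fin d),
          (if y = ⇑σ then ((Equiv.Perm.sign σ : ℤ) : ℂ) * ∏ i, g (x i) (y i) else 0) := by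
    intro y
    rw [det_Mv, Finset.mul_sum]
    refine Finset.sum_congr rfl fun σ _ => ?_
    split <;> ring
  simp only [hlhs]
  rw [Finset.sum_comm]
  refine Finset.sum_congr rfl fun σ _ => ?_
  rw [Finset.sum_ite_eq' Finset.univ (⇑σ)]
  simp

end InvAux

set_option maxHeartbeats 1000000 in
open InvAux in
/-- For the natural representation `E = ℂ^d` of `SU(d)`, the tensor power `E^{⊗N}`
contains a nonzero `SU(d)`-invariant vector if and only if `N` is a multiple of `d`. -/
theorem natural_power_invariant_iff_dvd (d N : ℕ) (hd : 1 ≤ d) :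
    (∃ Ψ : (Fin N → Fin d) → ℂ, Ψ ≠ 0 ∧
        ∀ g : Matrix.specialUnitaryGroup (Fin d) ℂ,
          tAct (g : Matrix (Fin d) (Fin d) ℂ) Ψ = Ψ) ↔ d ∣ N := by
  constructor
  · rintro ⟨Ψ, hΨ, hinv⟩
    have hdne : (d : ℕ) ≠ 0 := by omega
    set ω : ℂ := Complex.exp (2 * Real.pi * Complex.I / d) with hω
    have hprim : IsPrimitiveRoot ω d := Complex.isPrimitiveRoot_exp d hdne
    have hconj : (starRingEnd ℂ) ω * ω = 1 := by
      rw [hω, ← Complex.exp_conj, ← Complex.exp_add]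
      rw [show (starRingEnd ℂ) (2 * (Real.pi : ℂ) * Complex.I / d)
          = -(2 * (Real.pi : ℂ) * Complex.I / d) by
        simp only [map_div₀, _root_.map_mul, map_ofNat, Complex.conj_ofReal, Complex.conj_I,
          map_natCast]
        ring]
      simp
    set g : Matrix (Fin d) (Fin d) ℂ := ω • (1 : Matrix (Fin d) (Fin d) ℂ) with hg
    have hmem : g ∈ Matrix.specialUnitaryGroup (Fin d) ℂ := by
      rw [Matrix.mem_specialUnitaryGroup_iff]
      constructor
      · rw [Matrix.mem_unitaryGroup_iff]
        rw [hg]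
        rw [star_smul, star_one, smul_mul_assoc, Matrix.mul_smul, smul_smul, Matrix.one_mul]
        have h1 : star ω * ω = 1 := hconj
        rw [mul_comm, h1, one_smul]
      · rw [hg, Matrix.det_smul, Matrix.det_one, Fintype.card_fin, mul_one]
        exact hprim.pow_eq_one
    obtain ⟨x, hx⟩ := Function.ne_iff.mp hΨ
    have hact : tAct g Ψ x = ω ^ N * Ψ x := by
      have hprod : ∀ y : Fin N → Fin d,
          (∏ i, g (x i) (y i)) = if x = y then ω ^ N else 0 := by
        intro y
        have h1 : ∀ i, g (x i) (y i) = ω * (if x i = y i then 1 else 0) := by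
          intro i
          rw [hg]
          simp [Matrix.one_apply]
        simp only [h1]
        rw [Finset.prod_mul_distrib, Finset.prod_const, Fintype.prod_boole]
        rw [Finset.card_univ, Fintype.card_fin]
        by_cases h : x = y
        · simp [h, funext_iff]
        · rw [if_neg, if_neg h, mul_zero]
          simpa [funext_iff] using h
      simp only [tAct, hprod, ite_mul, zero_mul]
      rw [Finset.sum_ite_eq Finset.univ x]
      simp
    have := congrFun (hinv ⟨g, hmem⟩) x
    rw [hact] at this
    have hpow : ω ^ N = 1 := by
      by_contra h
      apply hx
      have := sub_eq_zero.mpr this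
      rw [show ω ^ N * Ψ x - Ψ x = (ω ^ N - 1) * Ψ x by ring] at this
      rcases mul_eq_zero.mp this with h' | h'
      · exact absurd (sub_eq_zero.mp h') h
      · exact h'
    exact hprim.dvd_of_pow_eq_one N hpow
  · rintro ⟨k, hk⟩
    have hN : N = k * d := by rw [hk, mul_comm]
    set e : Fin N ≃ Fin k × Fin d := (finCongr hN).trans finProdFinEquiv.symm with he
    set blk : (Fin N → Fin d) → Fin k → (Fin d → Fin d) :=
      fun x b i => x (e.symm (b, i)) with hblk
    refine ⟨fun x => ∏ b : Fin k, (Mv (blk x b)).det, ?_, ?_⟩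
    · intro h
      have h0 := congrFun h (fun n => (e n).2)
      have : ∀ b : Fin k, blk (fun n => (e n).2) b = fun i => i := by
        intro b
        funext i
        simp [hblk]
      simp only [this, det_Mv_id, Finset.prod_const_one] at h0
      exact one_ne_zero h0
    · rintro ⟨g, hg⟩
      obtain ⟨-, hdet⟩ := Matrix.mem_specialUnitaryGroup_iff.mp hg
      funext x
      show ∑ y : Fin N → Fin d, (∏ i, g (x i) (y i)) * ∏ b, (Mv (blk y b)).det
          = ∏ b, (Mv (blk x b)).det
      -- reindex the sum over `y` by curried block functions
      set E2 : (Fin N → Fin d) ≃ (Fin k → Fin d → Fin d) :=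
        (Equiv.arrowCongr e (Equiv.refl (Fin d))).trans (Equiv.curry _ _ _) with hE2
      rw [← Equiv.sum_comp E2.symm
        (fun y => (∏ i, g (x i) (y i)) * ∏ b, (Mv (blk y b)).det)]
      have hsymm : ∀ (Y : Fin k → Fin d → Fin d) (n : Fin N),
          E2.symm Y n = Y (e n).1 (e n).2 := by
        intro Y n
        simp [hE2, Equiv.curry, Equiv.arrowCongr, Function.uncurry]
      have hblkE : ∀ (Y : Fin k → Fin d → Fin d) (b : Fin k),
          blk (E2.symm Y) b = Y b := by
        intro Y b
        funext i
        simp [hblk, hsymm]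
      have hx2 : ∀ Y : Fin k → Fin d → Fin d,
          (∏ i : Fin N, g (x i) (E2.symm Y i))
            = ∏ b : Fin k, ∏ i : Fin d, g (x (e.symm (b, i))) (Y b i) := by
        intro Y
        rw [← Fintype.prod_prod_type
          (f := fun p : Fin k × Fin d => g (x (e.symm p)) (Y p.1 p.2))]
        rw [← Equiv.prod_comp e (fun p : Fin k × Fin d => g (x (e.symm p)) (Y p.1 p.2))]
        refine Finset.prod_congr rfl fun n _ => ?_
        rw [hsymm]
        simp
      calc ∑ Y : Fin k → Fin d → Fin d,
            (∏ i, g (x i) (E2.symm Y i)) * ∏ b, (Mv (blk (E2.symm Y) b)).det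
          = ∑ Y : Fin k → Fin d → Fin d,
            ∏ b, ((∏ i, g (x (e.symm (b, i))) (Y b i)) * (Mv (Y b)).det) := by
            refine Finset.sum_congr rfl fun Y _ => ?_
            rw [hx2, ← Finset.prod_mul_distrib]
            refine Finset.prod_congr rfl fun b _ => ?_
            rw [hblkE]
        _ = ∑ Y ∈ Fintype.piFinset (fun _ : Fin k => (Finset.univ : Finset (Fin d → Fin d))),
            ∏ b, ((∏ i, g (x (e.symm (b, i))) (Y b i)) * (Mv (Y b)).det) := by
            rw [Fintype.piFinset_univ]
        _ = ∏ b : Fin k, ∑ y : Fin d → Fin d,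
            ((∏ i, g (x (e.symm (b, i))) (y i)) * (Mv y).det) :=
            (Finset.prod_univ_sum (fun _ : Fin k => (Finset.univ : Finset (Fin d → Fin d)))
              (fun b y => (∏ i, g (x (e.symm (b, i))) (y i)) * (Mv y).det)).symm
        _ = ∏ b : Fin k, (Mv (blk x b)).det := by
            refine Finset.prod_congr rfl fun b _ => ?_
            have := key g (blk x b)
            rw [hdet, one_mul] at this
            rw [← this]
end
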